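/- arXiv:2511.16845 — 6 statements merged into one kernel-verified Lean document; each statement's English description precedes it below -/
import Mathlib

section
/- Let a : Fin K → ℝ satisfy radial monotonicity with mode m, and let S_L be the set consisting of m and the L indices with smallest distance to m, with induced interval I_L = [min S_L, max S_L]. Then for any interval [l, u] with l ≤ m ≤ u and u - l = L, the sum of a over I_L is at least the sum of a over [l, u]. That is, I_L achieves the maximal mass among all length-L intervals containing the mode. -/
open Finset

/-- Distance between indices on the integer line. -/
def ndist {K : ℕ} (m k : Fin K) : ℕ := max m.val k.val - min m.val k.val

/-- Radial monotonicity: unique mode `m`, and values non-increasing in distance from `m`. -/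
def RadialMono {K : ℕ} (a : Fin K → ℝ) (m : Fin K) : Prop :=
  (∀ k : Fin K, k ≠ m → a k < a m) ∧
  ∀ k₁ k₂ : Fin K, ndist m k₁ ≤ ndist m k₂ → a k₂ ≤ a k₁

/-- `S` consists of `m` together with the `L` indices closest to `m`
(ties broken arbitrarily). -/
def IsClosest {K : ℕ} (m : Fin K) (L : ℕ) (S : Finset (Fin K)) : Prop :=
  m ∈ S ∧ S.card = L + 1 ∧ ∀ k ∈ S, ∀ k' ∉ S, ndist m k ≤ ndist m k'

theorem stmt1 {K : ℕ} (a : Fin K → ℝ) (m : Fin K) (ha : RadialMono a m)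
    (L : ℕ) (S : Finset (Fin K)) (hS : IsClosest m L S) (hne : S.Nonempty)
    (l u : Fin K) (hlm : l ≤ m) (hmu : m ≤ u) (hlen : u.val - l.val = L) :
    ∑ k ∈ Finset.Icc l u, a k ≤ ∑ k ∈ Finset.Icc (S.min' hne) (S.max' hne), a k := by
  obtain ⟨hmS, hcardS, hclosest⟩ := hS
  have hmin : S.min' hne ≤ m := Finset.min'_le S m hmS
  have hmax : m ≤ S.max' hne := Finset.le_max' S m hmS
  have hSeq : Finset.Icc (S.min' hne) (S.max' hne) = S := by
    apply Finset.Subset.antisymm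
    · intro k hk
      simp only [Finset.mem_Icc] at hk
      by_contra hkS
      have h1 := hclosest _ (Finset.min'_mem S hne) k hkS
      have h2 := hclosest _ (Finset.max'_mem S hne) k hkS
      simp only [ndist] at h1 h2
      have hk1 : (S.min' hne).val ≤ k.val := hk.1
      have hk2 : k.val ≤ (S.max' hne).val := hk.2
      have hm1 : (S.min' hne).val ≤ m.val := hmin
      have hm2 : m.val ≤ (S.max' hne).val := hmax
      have hor : k.val = (S.min' hne).val ∨ k.val = (S.max' hne).val := by omega
      rcases hor with h | h
      · exact hkS (Fin.ext h ▸ Finset.min'_mem S hne)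
      · exact hkS (Fin.ext h ▸ Finset.max'_mem S hne)
    · intro k hk
      simp only [Finset.mem_Icc]
      exact ⟨Finset.min'_le S k hk, Finset.le_max' S k hk⟩
  rw [hSeq]
  set T := Finset.Icc l u with hT
  have hcardT : T.card = L + 1 := by
    rw [hT, Fin.card_Icc]
    have h1 : l.val ≤ m.val := hlm
    have h2 : m.val ≤ u.val := hmu
    omega
  have hcard : (T \ S).card = (S \ T).card :=
    Finset.card_sdiff_comm (hcardT.trans hcardS.symm)
  have key : ∑ k ∈ T \ S, a k ≤ ∑ k ∈ S \ T, a k := by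
    have e := Finset.equivOfCardEq hcard
    calc ∑ k ∈ T \ S, a k = ∑ x : ↥(T \ S), a ↑x := (Finset.sum_coe_sort _ _).symm
      _ ≤ ∑ x : ↥(T \ S), a ↑(e x) := by
          apply Finset.sum_le_sum
          intro x _
          apply ha.2
          have hx : ↑x ∉ S := (Finset.mem_sdiff.mp x.2).2
          have he : ↑(e x) ∈ S := (Finset.mem_sdiff.mp (e x).2).1
          exact hclosest _ he _ hx
      _ = ∑ y : ↥(S \ T), a ↑y := Equiv.sum_comp e (fun y => a ↑y)
      _ = ∑ k ∈ S \ T, a k := Finset.sum_coe_sort _ _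
  calc ∑ k ∈ T, a k = ∑ k ∈ T ∩ S, a k + ∑ k ∈ T \ S, a k :=
        (Finset.sum_inter_add_sum_sdiff T S a).symm
    _ ≤ ∑ k ∈ T ∩ S, a k + ∑ k ∈ S \ T, a k := by linarith
    _ = ∑ k ∈ S ∩ T, a k + ∑ k ∈ S \ T, a k := by rw [Finset.inter_comm]
    _ = ∑ k ∈ S, a k := Finset.sum_inter_add_sum_sdiff S T a
end

section
/- Let a : Fin K → ℝ satisfy radial monotonicity with mode m, let S_L be m together with the L indices of smallest distance to m, and let T = [l, u] be any interval of length L (u - l = L) containing m. Then ∑_{k ∈ S_L \ T} a_k ≥ ∑_{k ∈ T \ S_L} a_k. -/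
open Finset

theorem stmt2 {K : ℕ} (a : Fin K → ℝ) (m : Fin K) (ha : RadialMono a m)
    (L : ℕ) (S : Finset (Fin K)) (hS : IsClosest m L S)
    (l u : Fin K) (hlm : l ≤ m) (hmu : m ≤ u) (hlen : u.val - l.val = L) :
    ∑ k ∈ Finset.Icc l u \ S, a k ≤ ∑ k ∈ S \ Finset.Icc l u, a k := by
  set T := Finset.Icc l u with hT
  have hlu : l ≤ u := le_trans hlm hmu
  have hcardT : T.card = L + 1 := by
    rw [hT, Fin.card_Icc]
    have : l.val ≤ u.val := hlu
    omega
  have hcard : (T \ S).card = (S \ T).card := by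
    rw [card_sdiff_comm (by rw [hcardT, hS.2.1])]
  by_cases h0 : (S \ T) = ∅
  · have h1 : T \ S = ∅ := card_eq_zero.mp (by simp [hcard, h0])
    simp [h0, h1]
  · obtain ⟨k₀, hk₀, hmin⟩ := Finset.exists_min_image (S \ T) a
      (nonempty_of_ne_empty h0)
    have key : ∀ k' ∈ T \ S, a k' ≤ a k₀ := fun k' hk' =>
      ha.2 k₀ k' (hS.2.2 k₀ (mem_sdiff.mp hk₀).1 k' (mem_sdiff.mp hk').2)
    calc ∑ k ∈ T \ S, a k ≤ (T \ S).card • a k₀ :=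
          Finset.sum_le_card_nsmul _ _ _ key
      _ = (S \ T).card • a k₀ := by rw [hcard]
      _ ≤ ∑ k ∈ S \ T, a k :=
          Finset.card_nsmul_le_sum _ _ _ (fun k hk => hmin k hk)
end

section
/- Let a : Fin K → ℝ≥0 with ∑ a_k = 1 satisfy radial monotonicity with mode m. For τ ∈ (0,1], let C_τ denote the interval I_{L*(τ)}, where L*(τ) is the minimal length of an anchor-containing interval with mass ≥ τ and I_L is the maximal-mass length-L interval containing m. Then the prediction sets are nested in τ: τ₁ ≤ τ₂ implies C_{τ₁} ⊆ C_{τ₂}. -/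
open Finset

/-- The set of the first `L+1` indices in a fixed enumeration `e`. -/
def SL {K : ℕ} (e : Equiv.Perm (Fin K)) (L : ℕ) : Finset (Fin K) :=
  (Finset.univ.filter fun i : Fin K => i.val ≤ L).image e

/-- The enumeration `e` lists indices in non-decreasing distance from the mode `m`
(a fixed consistent tie-breaking). -/
def SortedByDist {K : ℕ} (m : Fin K) (e : Equiv.Perm (Fin K)) : Prop :=
  Monotone fun i => ndist m (e i)

theorem SL_nonempty {K : ℕ} (hK : 0 < K) (e : Equiv.Perm (Fin K)) (L : ℕ) :
    (SL e L).Nonempty :=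
  ⟨e ⟨0, hK⟩, Finset.mem_image.mpr ⟨⟨0, hK⟩, by simp⟩⟩

/-- The interval induced by `SL e L`: `[min S_L, max S_L]`. -/
def IL {K : ℕ} (hK : 0 < K) (e : Equiv.Perm (Fin K)) (L : ℕ) : Finset (Fin K) :=
  Finset.Icc ((SL e L).min' (SL_nonempty hK e L)) ((SL e L).max' (SL_nonempty hK e L))

/-- Minimal length of an anchor-containing interval with mass at least `τ`. -/
noncomputable def Lstar {K : ℕ} (a : Fin K → ℝ) (m : Fin K) (τ : ℝ) : ℕ :=
  sInf {L : ℕ | ∃ l u : Fin K, l ≤ m ∧ m ≤ u ∧ u.val - l.val = L ∧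
    τ ≤ ∑ k ∈ Finset.Icc l u, a k}

theorem stmt5 {K : ℕ} (hK : 0 < K) (a : Fin K → ℝ) (m : Fin K) (ha : RadialMono a m)
    (hpos : ∀ k, 0 ≤ a k) (hsum : ∑ k, a k = 1)
    (e : Equiv.Perm (Fin K)) (he : SortedByDist m e)
    (τ₁ τ₂ : ℝ) (h1 : τ₁ ∈ Set.Ioc (0 : ℝ) 1) (h2 : τ₂ ∈ Set.Ioc (0 : ℝ) 1)
    (h12 : τ₁ ≤ τ₂) :
    IL hK e (Lstar a m τ₁) ⊆ IL hK e (Lstar a m τ₂) := by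
  have hLmono : Lstar a m τ₁ ≤ Lstar a m τ₂ := by
    have hne : {L : ℕ | ∃ l u : Fin K, l ≤ m ∧ m ≤ u ∧ u.val - l.val = L ∧
        τ₂ ≤ ∑ k ∈ Finset.Icc l u, a k}.Nonempty := by
      refine ⟨K - 1, ⟨0, hK⟩, ⟨K - 1, Nat.sub_lt hK one_pos⟩, ?_, ?_, rfl, ?_⟩
      · exact Fin.mk_le_mk.mpr (Nat.zero_le _)
      · exact Fin.mk_le_mk.mpr (Nat.le_sub_one_of_lt m.isLt)
      · have : Finset.Icc (⟨0, hK⟩ : Fin K) ⟨K - 1, Nat.sub_lt hK one_pos⟩ = Finset.univ := by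
          ext k
          simp [Fin.le_def, Nat.le_sub_one_of_lt k.isLt]
        rw [this, hsum]
        exact h2.2
    have hmem := Nat.sInf_mem hne
    obtain ⟨l, u, hl, hu, hlen, hτ⟩ := hmem
    exact Nat.sInf_le ⟨l, u, hl, hu, hlen, h12.trans hτ⟩
  have hSL : SL e (Lstar a m τ₁) ⊆ SL e (Lstar a m τ₂) := by
    apply Finset.image_subset_image
    intro i hi
    simp only [Finset.mem_filter, Finset.mem_univ, true_and] at hi ⊢
    exact hi.trans hLmono
  apply Finset.Icc_subset_Icc
  · exact Finset.min'_le _ _ (hSL (Finset.min'_mem _ _))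
  · exact Finset.le_max' _ _ (hSL (Finset.max'_mem _ _))
end

section
/- Let a : Fin K → ℝ≥0 satisfy radial monotonicity with mode m, and let I_L be the interval induced by S_L (mode plus L closest indices). Then for every τ ∈ (0,1] with τ ≤ ∑_k a_k, the interval I_{L*(τ)} is an exact minimizer of the interval-length objective over the feasible set U(τ) = { (l,u) : ∑_{k=l}^u a_k ≥ τ, l ≤ m ≤ u }; that is, I_{L*(τ)} is feasible and any feasible interval (l,u) has length u - l ≥ L*(τ). -/
open Finset

lemma mem_SL {K : ℕ} (e : Equiv.Perm (Fin K)) (L : ℕ) (k : Fin K) :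
    k ∈ SL e L ↔ (e.symm k).val ≤ L := by
  simp only [SL, Finset.mem_image, Finset.mem_filter, Finset.mem_univ, true_and]
  constructor
  · rintro ⟨i, hi, rfl⟩; simpa using hi
  · intro h; exact ⟨e.symm k, h, e.apply_symm_apply k⟩

lemma e_zero {K : ℕ} (hK : 0 < K) (m : Fin K) (e : Equiv.Perm (Fin K))
    (he : SortedByDist m e) : e ⟨0, hK⟩ = m := by
  have h := he (a := ⟨0, hK⟩) (b := e.symm m) (by exact Fin.mk_le_mk.mpr (Nat.zero_le _))
  simp only [Equiv.apply_symm_apply] at h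
  have : ndist m (e ⟨0, hK⟩) = 0 := le_antisymm (by simpa [ndist] using h) (Nat.zero_le _)
  have := this
  unfold ndist at this
  exact (Fin.ext (by omega)).symm

lemma m_mem_SL {K : ℕ} (hK : 0 < K) (m : Fin K) (e : Equiv.Perm (Fin K))
    (he : SortedByDist m e) (L : ℕ) : m ∈ SL e L := by
  rw [mem_SL]
  have h := e_zero hK m e he
  have : e.symm m = ⟨0, hK⟩ := by rw [← h, Equiv.symm_apply_apply]
  simp [this]

lemma card_SL {K : ℕ} (e : Equiv.Perm (Fin K)) (L : ℕ) (h : L < K) :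
    (SL e L).card = L + 1 := by
  rw [SL, Finset.card_image_of_injective _ e.injective]
  have : (Finset.univ.filter fun i : Fin K => i.val ≤ L) = Finset.Iic ⟨L, h⟩ := by
    ext i; simp [Fin.le_def]
  rw [this, Fin.card_Iic]

lemma sum_le_closest {K : ℕ} (a : Fin K → ℝ) (m : Fin K) (ha : RadialMono a m)
    (hpos : ∀ k, 0 ≤ a k) (S T : Finset (Fin K))
    (hclose : ∀ k ∈ S, ∀ k' ∉ S, ndist m k ≤ ndist m k')
    (hcard : T.card ≤ S.card) : ∑ k ∈ T, a k ≤ ∑ k ∈ S, a k := by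
  have hkey : ∀ x ∈ T \ S, ∀ y ∈ S \ T, a x ≤ a y := by
    intro x hx y hy
    exact ha.2 y x (hclose y (Finset.mem_sdiff.mp hy).1 x (Finset.mem_sdiff.mp hx).2)
  have hc : (T \ S).card ≤ (S \ T).card := by
    have h1 := Finset.card_sdiff_add_card_inter T S
    have h2 := Finset.card_sdiff_add_card_inter S T
    have h3 : (T ∩ S).card = (S ∩ T).card := by rw [Finset.inter_comm]
    omega
  have hmain : ∑ k ∈ T \ S, a k ≤ ∑ k ∈ S \ T, a k := by
    rcases Finset.eq_empty_or_nonempty (S \ T) with hSe | hSn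
    · have hz : (S \ T).card = 0 := by rw [hSe]; rfl
      have : (T \ S).card = 0 := by omega
      rw [Finset.card_eq_zero] at this
      simp [this, hSe]
    · obtain ⟨y₀, hy₀, hy₀min⟩ := Finset.exists_min_image (S \ T) a hSn
      have h0 : 0 ≤ a y₀ := hpos y₀
      calc ∑ k ∈ T \ S, a k ≤ (T \ S).card • a y₀ :=
            Finset.sum_le_card_nsmul _ _ _ (fun x hx => hkey x hx y₀ hy₀)
        _ ≤ (S \ T).card • a y₀ := by
            simp only [nsmul_eq_mul]
            exact mul_le_mul_of_nonneg_right (by exact_mod_cast hc) h0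
        _ ≤ ∑ k ∈ S \ T, a k := Finset.card_nsmul_le_sum _ _ _ hy₀min
  have e1 := Finset.sum_inter_add_sum_sdiff T S a
  have e2 := Finset.sum_inter_add_sum_sdiff S T a
  rw [Finset.inter_comm] at e2
  linarith

lemma Icc_eq_SL {K : ℕ} (hK : 0 < K) (m : Fin K) (e : Equiv.Perm (Fin K))
    (he : SortedByDist m e) (L : ℕ) (hne : (SL e L).Nonempty) :
    Finset.Icc ((SL e L).min' hne) ((SL e L).max' hne) = SL e L := by
  have hm := m_mem_SL hK m e he L
  ext k
  simp only [Finset.mem_Icc]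
  constructor
  · rintro ⟨h1, h2⟩
    by_contra hk
    have hk' := hk
    rw [mem_SL] at hk'
    push_neg at hk'
    have hge : ∀ j ∈ SL e L, ndist m j ≤ ndist m k := by
      intro j hj
      rw [mem_SL] at hj
      have h := he (a := e.symm j) (b := e.symm k) (Fin.le_def.mpr (by omega))
      simp only [Equiv.apply_symm_apply] at h
      exact h
    have hmin := (SL e L).min'_mem hne
    have hmax := (SL e L).max'_mem hne
    have hminm : ((SL e L).min' hne).val ≤ m.val := Fin.le_def.mp (Finset.min'_le _ _ hm)
    have hmmax : m.val ≤ ((SL e L).max' hne).val := Fin.le_def.mp (Finset.le_max' _ _ hm)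
    have h1' := Fin.le_def.mp h1
    have h2' := Fin.le_def.mp h2
    rcases le_or_gt k.val m.val with hkm | hkm
    · have h := hge _ hmin
      unfold ndist at h
      have hek : k = (SL e L).min' hne := Fin.ext (by omega)
      rw [hek] at hk
      exact hk hmin
    · have h := hge _ hmax
      unfold ndist at h
      have hek : k = (SL e L).max' hne := Fin.ext (by omega)
      rw [hek] at hk
      exact hk hmax
  · intro hk
    exact ⟨Finset.min'_le _ _ hk, Finset.le_max' _ _ hk⟩

theorem stmt6 {K : ℕ} (hK : 0 < K) (a : Fin K → ℝ) (m : Fin K) (ha : RadialMono a m)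
    (hpos : ∀ k, 0 ≤ a k) (e : Equiv.Perm (Fin K)) (he : SortedByDist m e)
    (τ : ℝ) (hτ : τ ∈ Set.Ioc (0 : ℝ) 1) (hfeas : τ ≤ ∑ k, a k) :
    (SL e (Lstar a m τ)).min' (SL_nonempty hK e _) ≤ m ∧
    m ≤ (SL e (Lstar a m τ)).max' (SL_nonempty hK e _) ∧
    τ ≤ ∑ k ∈ IL hK e (Lstar a m τ), a k ∧
    ((SL e (Lstar a m τ)).max' (SL_nonempty hK e _)).val -
      ((SL e (Lstar a m τ)).min' (SL_nonempty hK e _)).val = Lstar a m τ ∧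
    ∀ l u : Fin K, l ≤ m → m ≤ u → τ ≤ ∑ k ∈ Finset.Icc l u, a k →
      Lstar a m τ ≤ u.val - l.val := by
  set T : Set ℕ := {L : ℕ | ∃ l u : Fin K, l ≤ m ∧ m ≤ u ∧ u.val - l.val = L ∧
    τ ≤ ∑ k ∈ Finset.Icc l u, a k} with hT
  have hTne : T.Nonempty := by
    refine ⟨K - 1, ⟨⟨0, hK⟩, ⟨K - 1, by omega⟩, ?_, ?_, by simp, ?_⟩⟩
    · exact Fin.le_def.mpr (Nat.zero_le _)
    · exact Fin.le_def.mpr (by have := m.isLt; simp only [Fin.val_mk]; omega)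
    · have huniv : Finset.Icc (⟨0, hK⟩ : Fin K) ⟨K - 1, by omega⟩ = Finset.univ := by
        ext k
        simp [Fin.le_def]
        have := k.isLt; omega
      rw [huniv]; exact hfeas
  have hLmem : Lstar a m τ ∈ T := Nat.sInf_mem hTne
  obtain ⟨l, u, hlm, hmu, hlen, hmass⟩ := hLmem
  set L := Lstar a m τ with hLdef
  have hLK : L < K := by have := u.isLt; omega
  have hne := SL_nonempty hK e L
  have hm := m_mem_SL hK m e he L
  have hIcc := Icc_eq_SL hK m e he L hne
  have hcardS : (SL e L).card = L + 1 := card_SL e L hLK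
  have hclose : ∀ k ∈ SL e L, ∀ k' ∉ SL e L, ndist m k ≤ ndist m k' := by
    intro k hk k' hk'
    rw [mem_SL] at hk hk'
    push_neg at hk'
    have h := he (a := e.symm k) (b := e.symm k') (Fin.le_def.mpr (by omega))
    simp only [Equiv.apply_symm_apply] at h
    exact h
  have hcardIcc : (Finset.Icc l u).card = L + 1 := by
    rw [Fin.card_Icc]
    have hlu : l.val ≤ u.val := le_trans (Fin.le_def.mp hlm) (Fin.le_def.mp hmu)
    omega
  refine ⟨Finset.min'_le _ _ hm, Finset.le_max' _ _ hm, ?_, ?_, ?_⟩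
  · have hsum : ∑ k ∈ Finset.Icc l u, a k ≤ ∑ k ∈ SL e L, a k := by
      apply sum_le_closest a m ha hpos _ _ hclose
      rw [hcardS, hcardIcc]
    have hIL : IL hK e L = SL e L := hIcc
    rw [hIL]
    exact le_trans hmass hsum
  · have hcc : (Finset.Icc ((SL e L).min' hne) ((SL e L).max' hne)).card = L + 1 := by
      rw [hIcc, hcardS]
    rw [Fin.card_Icc] at hcc
    have hmin : ((SL e L).min' hne).val ≤ m.val := Fin.le_def.mp (Finset.min'_le _ _ hm)
    have hmax : m.val ≤ ((SL e L).max' hne).val := Fin.le_def.mp (Finset.le_max' _ _ hm)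
    omega
  · intro l' u' h1 h2 h3
    exact Nat.sInf_le ⟨l', u', h1, h2, rfl, h3⟩
end

section
/- Let (Z_1, ..., Z_{n+1}) be exchangeable {0,1}-valued random variables (coverage indicators). If with probability one at least ⌈(1-α)(n+1)⌉ of the n+1 indicators equal 1, then P(Z_{n+1} = 1) ≥ 1 - α. -/
open MeasureTheory
open scoped ENNReal

theorem stmt9 {Ω : Type*} [MeasurableSpace Ω] (μ : Measure Ω)
    [IsProbabilityMeasure μ]
    (n : ℕ) (α : ℝ) (hα : α ∈ Set.Ioo (0 : ℝ) 1)
    (Z : Fin (n + 1) → Ω → ℝ) (hmeas : ∀ i, Measurable (Z i))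
    (h01 : ∀ i ω, Z i ω = 0 ∨ Z i ω = 1)
    (hexch : ∀ σ : Equiv.Perm (Fin (n + 1)),
      Measure.map (fun ω i => Z (σ i) ω) μ = Measure.map (fun ω i => Z i ω) μ)
    (hcount : ∀ᵐ ω ∂μ,
      (⌈(1 - α) * ((n : ℝ) + 1)⌉ : ℤ) ≤
        ((Finset.univ.filter fun i => Z i ω = 1).card : ℤ)) :
    ENNReal.ofReal (1 - α) ≤ μ {ω | Z (Fin.last n) ω = 1} := by
  obtain ⟨hα0, hα1⟩ := hα
  have hms : ∀ i : Fin (n + 1), MeasurableSet {ω | Z i ω = 1} := fun i =>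
    (hmeas i) (measurableSet_singleton (1 : ℝ))
  -- all marginals equal
  have hmarg : ∀ i : Fin (n + 1),
      μ {ω | Z i ω = 1} = μ {ω | Z (Fin.last n) ω = 1} := by
    intro i
    set σ := Equiv.swap i (Fin.last n) with hσ
    have hT : Measurable (fun ω (j : Fin (n + 1)) => Z j ω) :=
      measurable_pi_lambda _ fun j => hmeas j
    have hTσ : Measurable (fun ω (j : Fin (n + 1)) => Z (σ j) ω) :=
      measurable_pi_lambda _ fun j => hmeas (σ j)
    have hS : MeasurableSet {f : Fin (n + 1) → ℝ | f i = 1} := by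
      have : {f : Fin (n + 1) → ℝ | f i = 1}
          = (fun f : Fin (n + 1) → ℝ => f i) ⁻¹' {1} := rfl
      rw [this]
      exact (measurable_pi_apply i) (measurableSet_singleton (1 : ℝ))
    have h1 : μ {ω | Z (σ i) ω = 1}
        = Measure.map (fun ω (j : Fin (n + 1)) => Z (σ j) ω) μ
            {f : Fin (n + 1) → ℝ | f i = 1} := by
      rw [Measure.map_apply hTσ hS]; rfl
    have h2 : μ {ω | Z i ω = 1}
        = Measure.map (fun ω (j : Fin (n + 1)) => Z j ω) μ
            {f : Fin (n + 1) → ℝ | f i = 1} := by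
      rw [Measure.map_apply hT hS]; rfl
    have hσi : σ i = Fin.last n := Equiv.swap_apply_left _ _
    rw [← hσi, h1, h2, hexch σ]
  -- sum of measures equals integral of the count
  have hsum : (∑ i : Fin (n + 1), μ {ω | Z i ω = 1})
      = ∫⁻ ω, (((Finset.univ.filter fun i => Z i ω = 1).card : ℕ) : ℝ≥0∞) ∂μ := by
    have heach : ∀ i : Fin (n + 1), μ {ω | Z i ω = 1}
        = ∫⁻ ω, Set.indicator {ω | Z i ω = 1} (fun _ => (1 : ℝ≥0∞)) ω ∂μ := by
      intro i
      rw [lintegral_indicator (hms i)]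
      simp
    rw [Finset.sum_congr rfl fun i _ => heach i, ← lintegral_finset_sum]
    · apply lintegral_congr
      intro ω
      rw [Finset.card_filter]
      push_cast
      apply Finset.sum_congr rfl
      intro i _
      by_cases h : Z i ω = 1 <;> simp [Set.indicator, h]
    · intro i _
      exact measurable_one.indicator (hms i)
  -- lower bound the integral
  have hbound : ENNReal.ofReal ((1 - α) * ((n : ℝ) + 1))
      ≤ ∫⁻ ω, (((Finset.univ.filter fun i => Z i ω = 1).card : ℕ) : ℝ≥0∞) ∂μ := by
    have : ∫⁻ _, ENNReal.ofReal ((1 - α) * ((n : ℝ) + 1)) ∂μ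
        = ENNReal.ofReal ((1 - α) * ((n : ℝ) + 1)) := by
      simp
    rw [← this]
    apply lintegral_mono_ae
    filter_upwards [hcount] with ω hω
    have h1 : (1 - α) * ((n : ℝ) + 1)
        ≤ ((Finset.univ.filter fun i => Z i ω = 1).card : ℝ) := by
      calc (1 - α) * ((n : ℝ) + 1) ≤ (⌈(1 - α) * ((n : ℝ) + 1)⌉ : ℝ) := Int.le_ceil _
        _ ≤ _ := by exact_mod_cast hω
    calc ENNReal.ofReal ((1 - α) * ((n : ℝ) + 1))
        ≤ ENNReal.ofReal ((Finset.univ.filter fun i => Z i ω = 1).card : ℝ) :=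
          ENNReal.ofReal_le_ofReal h1
      _ = _ := ENNReal.ofReal_natCast _
  -- put pieces together
  have hsum' : (∑ i : Fin (n + 1), μ {ω | Z i ω = 1})
      = ((n : ℝ≥0∞) + 1) * μ {ω | Z (Fin.last n) ω = 1} := by
    rw [Finset.sum_congr rfl fun i _ => hmarg i, Finset.sum_const, Finset.card_univ,
      Fintype.card_fin]
    simp [nsmul_eq_mul]
  have hkey : ENNReal.ofReal (1 - α) * ((n : ℝ≥0∞) + 1)
      ≤ μ {ω | Z (Fin.last n) ω = 1} * ((n : ℝ≥0∞) + 1) := by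
    have hrw : ENNReal.ofReal ((1 - α) * ((n : ℝ) + 1))
        = ENNReal.ofReal (1 - α) * ((n : ℝ≥0∞) + 1) := by
      rw [ENNReal.ofReal_mul (by linarith)]
      congr 1
      rw [ENNReal.ofReal_add (by positivity) (by norm_num), ENNReal.ofReal_natCast,
        ENNReal.ofReal_one]
    calc ENNReal.ofReal (1 - α) * ((n : ℝ≥0∞) + 1)
        = ENNReal.ofReal ((1 - α) * ((n : ℝ) + 1)) := hrw.symm
      _ ≤ ∫⁻ ω, (((Finset.univ.filter fun i => Z i ω = 1).card : ℕ) : ℝ≥0∞) ∂μ := hbound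
      _ = ∑ i : Fin (n + 1), μ {ω | Z i ω = 1} := hsum.symm
      _ = ((n : ℝ≥0∞) + 1) * μ {ω | Z (Fin.last n) ω = 1} := hsum'
      _ = μ {ω | Z (Fin.last n) ω = 1} * ((n : ℝ≥0∞) + 1) := mul_comm _ _
  exact (ENNReal.mul_le_mul_iff_left (by simp)
    (ENNReal.add_ne_top.mpr ⟨ENNReal.natCast_ne_top n, ENNReal.one_ne_top⟩)).mp hkey
end

section
/- Let a : Fin K → ℝ be unimodal in the sense of radial monotonicity with mode m. Then any prediction set formed by taking the top-(L+1) values of a (i.e., the L+1 indices with the largest a-values, with consistent tie-breaking toward the mode) is a contiguous interval of {1,...,K} containing m. -/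
open Finset

theorem stmt14 {K : ℕ} (a : Fin K → ℝ) (m : Fin K) (ha : RadialMono a m)
    (L : ℕ) (T : Finset (Fin K)) (hne : T.Nonempty) (hcard : T.card = L + 1)
    (htop : ∀ k ∈ T, ∀ k' ∉ T, a k' ≤ a k)
    (htie : ∀ k ∈ T, ∀ k' ∉ T, a k = a k' → ndist m k ≤ ndist m k') :
    m ∈ T ∧ T = Finset.Icc (T.min' hne) (T.max' hne) := by
  have hm : m ∈ T := by
    by_contra hmT
    obtain ⟨k, hk⟩ := hne
    have h1 := htop k hk m hmT
    rcases eq_or_ne k m with rfl | hne'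
    · exact hmT hk
    · exact absurd (ha.1 k hne') (not_lt.2 h1)
  refine ⟨hm, Finset.Subset.antisymm ?_ ?_⟩
  · intro k hk
    simp [Finset.mem_Icc, T.min'_le k hk, T.le_max' k hk]
  · intro j hj
    rw [Finset.mem_Icc] at hj
    by_contra hjT
    rcases le_or_gt m.val j.val with hmj | hjm
    · have hmem := T.max'_mem hne
      have hjmax : j.val < (T.max' hne).val := by
        rcases lt_or_eq_of_le hj.2 with h | h
        · exact h
        · exact absurd (h ▸ hmem) hjT
      have hmmax : m.val ≤ (T.max' hne).val := T.le_max' m hm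
      have hd : ndist m j < ndist m (T.max' hne) := by
        unfold ndist; omega
      have h1 : a (T.max' hne) ≤ a j := ha.2 j _ (le_of_lt hd)
      have h2 : a j ≤ a (T.max' hne) := htop _ hmem j hjT
      have h3 := htie _ hmem j hjT (le_antisymm h1 h2)
      omega
    · have hmem := T.min'_mem hne
      have hjmin : (T.min' hne).val < j.val := by
        rcases lt_or_eq_of_le hj.1 with h | h
        · exact h
        · exact absurd (h ▸ hmem) hjT
      have hmmin : (T.min' hne).val ≤ m.val := T.min'_le m hm
      have hd : ndist m j < ndist m (T.min' hne) := by
        unfold ndist; omega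
      have h1 : a (T.min' hne) ≤ a j := ha.2 j _ (le_of_lt hd)
      have h2 : a j ≤ a (T.min' hne) := htop _ hmem j hjT
      have h3 := htie _ hmem j hjT (le_antisymm h1 h2)
      omega
end
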